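/- A bounded operator J on L²(ℝ) is an operator of pointwise multiplication by some function h ∈ L∞(ℝ) if and only if for every pair of disjoint Borel sets A, B ⊂ ℝ one has M_{1_A} ∘ J ∘ M_{1_B} = 0. -/

import Mathlib

/-!
If `1_A J 1_B = 0` for disjoint `A` and `B`, then `J` commutes with every `1_s`:
`J 1_s = 1_s J 1_s + 1_{sᶜ} J 1_s = 1_s J 1_s`, and likewise `1_s J = 1_s J 1_s`. Hence
`1_s · J 1_t = J 1_{s ∩ t} = 1_t · J 1_s` for sets of finite measure, and taking `s` in an
exhausting sequence `Sₙ` of sets of finite measure gives `J 1_t = 1_t h`, where `h := J 1_{Sₙ}`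
on `Sₙ`. Comparing `∫_t |h|^p = ‖J 1_t‖ₚ^p ≤ ‖J‖^p μ(t)` for all `t` yields `|h| ≤ ‖J‖` a.e.,
so multiplication by `h` is bounded; it agrees with `J` on indicators, whose span is dense.
-/

open MeasureTheory Filter Set
open scoped Real ENNReal ComplexConjugate

noncomputable section

open scoped Classical in
/-- Pointwise multiplication by the indicator function of `A` on `L²(ℝ)`. -/
def indMul (A : Set ℝ) (f : Lp ℂ 2 (volume : Measure ℝ)) : Lp ℂ 2 (volume : Measure ℝ) :=
  if hA : MeasurableSet A then
    ((Lp.memLp f).indicator hA).toLp (A.indicator (f : ℝ → ℂ))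
  else 0

section IndicatorLp

variable {α E : Type*} [MeasurableSpace α] {μ : Measure α} [NormedAddCommGroup E] {p : ℝ≥0∞}
  {s t : Set α}

def indicatorLp (hs : MeasurableSet s) (f : Lp E p μ) : Lp E p μ :=
  ((Lp.memLp f).indicator hs).toLp (s.indicator f)

lemma coeFn_indicatorLp (hs : MeasurableSet s) (f : Lp E p μ) :
    indicatorLp hs f =ᵐ[μ] s.indicator f :=
  MemLp.coeFn_toLp _

lemma indicatorLp_add (hs : MeasurableSet s) (f g : Lp E p μ) :
    indicatorLp hs (f + g) = indicatorLp hs f + indicatorLp hs g := by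
  refine Lp.ext ?_
  filter_upwards [coeFn_indicatorLp hs (f + g), coeFn_indicatorLp hs f, coeFn_indicatorLp hs g,
    Lp.coeFn_add f g, Lp.coeFn_add (indicatorLp hs f) (indicatorLp hs g)] with x h h₁ h₂ hfg hsum
  rw [h, hsum, Pi.add_apply, h₁, h₂]
  by_cases hx : x ∈ s
  · simp only [indicator_of_mem hx, hfg, Pi.add_apply]
  · simp only [indicator_of_notMem hx, add_zero]

lemma indicatorLp_add_indicatorLp_compl (hs : MeasurableSet s) (f : Lp E p μ) :
    indicatorLp hs f + indicatorLp hs.compl f = f := by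
  refine Lp.ext ?_
  filter_upwards [coeFn_indicatorLp hs f, coeFn_indicatorLp hs.compl f,
    Lp.coeFn_add (indicatorLp hs f) (indicatorLp hs.compl f)] with x h₁ h₂ hsum
  rw [hsum, Pi.add_apply, h₁, h₂, indicator_self_add_compl_apply]

lemma indicatorLp_indicatorLp_eq_zero (hs : MeasurableSet s) (ht : MeasurableSet t)
    (hst : Disjoint s t) (f : Lp E p μ) : indicatorLp hs (indicatorLp ht f) = 0 := by
  refine Lp.eq_zero_iff_ae_eq_zero.2 ?_
  filter_upwards [coeFn_indicatorLp hs (indicatorLp ht f), coeFn_indicatorLp ht f] with x h₁ h₂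
  by_cases hx : x ∈ s
  · rw [h₁, indicator_of_mem hx, h₂, indicator_of_notMem (hst.notMem_of_mem_left hx)]; rfl
  · rw [h₁, indicator_of_notMem hx]; rfl

lemma indicatorLp_indicatorConstLp (hs : MeasurableSet s) (ht : MeasurableSet t) (hμt : μ t ≠ ∞)
    (c : E) : indicatorLp hs (indicatorConstLp p ht hμt c) =
      indicatorConstLp p (hs.inter ht) (measure_inter_ne_top_of_right_ne_top hμt) c := by
  refine Lp.ext ?_
  filter_upwards [coeFn_indicatorLp hs (indicatorConstLp p ht hμt c),
    indicatorConstLp_coeFn (p := p) (hs := ht) (hμs := hμt) (c := c),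
    indicatorConstLp_coeFn (p := p) (hs := hs.inter ht)
      (hμs := measure_inter_ne_top_of_right_ne_top hμt) (c := c)] with x h₁ h₂ h₃
  by_cases hx : x ∈ s <;> simp [h₁, h₂, h₃, ← indicator_indicator, hx]

lemma indicatorConstLp_eq_smul_one {𝕜 : Type*} [RCLike 𝕜] (hs : MeasurableSet s) (hμs : μ s ≠ ∞)
    (c : 𝕜) : indicatorConstLp p hs hμs c = c • indicatorConstLp p hs hμs (1 : 𝕜) := by
  refine Lp.ext ?_
  filter_upwards [indicatorConstLp_coeFn (p := p) (hs := hs) (hμs := hμs) (c := c),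
    indicatorConstLp_coeFn (p := p) (hs := hs) (hμs := hμs) (c := (1 : 𝕜)),
    Lp.coeFn_smul c (indicatorConstLp p hs hμs (1 : 𝕜))] with x h₁ h₂ h₃
  by_cases hx : x ∈ s <;> simp [h₁, h₂, h₃, hx]

end IndicatorLp

section Multiplier

variable {α 𝕜 : Type*} [MeasurableSpace α] {μ : Measure α} [RCLike 𝕜] {p : ℝ≥0∞} [Fact (1 ≤ p)]

def CommutesWithIndicators (J : Lp 𝕜 p μ →L[𝕜] Lp 𝕜 p μ) : Prop :=
  ∀ ⦃s : Set α⦄ (hs : MeasurableSet s) (f : Lp 𝕜 p μ), J (indicatorLp hs f) = indicatorLp hs (J f)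

lemma commutesWithIndicators_iff (J : Lp 𝕜 p μ →L[𝕜] Lp 𝕜 p μ) :
    CommutesWithIndicators J ↔ ∀ ⦃A B : Set α⦄ (hA : MeasurableSet A) (hB : MeasurableSet B),
      Disjoint A B → ∀ f, indicatorLp hA (J (indicatorLp hB f)) = 0 := by
  refine ⟨fun hJ A B hA hB hAB f ↦ ?_, fun hJ s hs f ↦ ?_⟩
  · rw [hJ hB, indicatorLp_indicatorLp_eq_zero hA hB hAB]
  have h₁ : indicatorLp hs.compl (J (indicatorLp hs f)) = 0 :=
    hJ hs.compl hs disjoint_compl_left f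
  have h₂ : indicatorLp hs (J (indicatorLp hs.compl f)) = 0 :=
    hJ hs hs.compl disjoint_compl_right f
  calc J (indicatorLp hs f)
      = indicatorLp hs (J (indicatorLp hs f)) + indicatorLp hs.compl (J (indicatorLp hs f)) :=
        (indicatorLp_add_indicatorLp_compl hs _).symm
    _ = indicatorLp hs (J (indicatorLp hs f)) + indicatorLp hs (J (indicatorLp hs.compl f)) := by
        rw [h₁, h₂]
    _ = indicatorLp hs (J f) := by
        rw [← indicatorLp_add, ← map_add, indicatorLp_add_indicatorLp_compl]

lemma CommutesWithIndicators.indicator_ae_eq_apply_indicatorConstLp_inter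
    {J : Lp 𝕜 p μ →L[𝕜] Lp 𝕜 p μ} (hJ : CommutesWithIndicators J) {s t : Set α}
    (hs : MeasurableSet s) (ht : MeasurableSet t) (hμt : μ t ≠ ∞) :
    s.indicator (J (indicatorConstLp p ht hμt 1)) =ᵐ[μ]
      J (indicatorConstLp p (hs.inter ht) (measure_inter_ne_top_of_right_ne_top hμt) (1 : 𝕜)) := by
  rw [← indicatorLp_indicatorConstLp, hJ]
  exact (coeFn_indicatorLp hs _).symm

lemma CommutesWithIndicators.indicator_ae_eq_indicator {J : Lp 𝕜 p μ →L[𝕜] Lp 𝕜 p μ}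
    (hJ : CommutesWithIndicators J) {s t : Set α} (hs : MeasurableSet s) (hμs : μ s ≠ ∞)
    (ht : MeasurableSet t) (hμt : μ t ≠ ∞) :
    s.indicator (J (indicatorConstLp p ht hμt 1)) =ᵐ[μ]
      t.indicator (J (indicatorConstLp p hs hμs 1)) := by
  refine (hJ.indicator_ae_eq_apply_indicatorConstLp_inter hs ht hμt).trans
    (EventuallyEq.trans ?_ (hJ.indicator_ae_eq_apply_indicatorConstLp_inter ht hs hμs).symm)
  simp_rw [inter_comm s t]
  rfl

variable [SigmaFinite μ]

variable (𝕜 μ p) in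
def spanningSetsIndicator (n : ℕ) : Lp 𝕜 p μ :=
  indicatorConstLp p (measurableSet_spanningSets μ n) (measure_spanningSets_lt_top μ n).ne 1

def multiplier (J : Lp 𝕜 p μ →L[𝕜] Lp 𝕜 p μ) (x : α) : 𝕜 :=
  J (spanningSetsIndicator 𝕜 μ p (spanningSetsIndex μ x)) x

lemma measurable_multiplier (J : Lp 𝕜 p μ →L[𝕜] Lp 𝕜 p μ) : Measurable (multiplier J) := by
  have hF : Measurable fun y : α × ℕ ↦ J (spanningSetsIndicator 𝕜 μ p y.2) y.1 :=
    measurable_from_prod_countable_left fun n ↦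
      (Lp.stronglyMeasurable (J (spanningSetsIndicator 𝕜 μ p n))).measurable
  have hN : Measurable fun x : α ↦ (x, spanningSetsIndex μ x) :=
    measurable_id.prodMk (measurableSet_spanningSetsIndex μ)
  have h := hF.comp hN
  unfold multiplier
  exact h

lemma CommutesWithIndicators.apply_indicatorConstLp_ae_eq {J : Lp 𝕜 p μ →L[𝕜] Lp 𝕜 p μ}
    (hJ : CommutesWithIndicators J) {t : Set α} (ht : MeasurableSet t) (hμt : μ t ≠ ∞) :
    J (indicatorConstLp p ht hμt 1) =ᵐ[μ] t.indicator (multiplier J) := by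
  filter_upwards [ae_all_iff.2 fun n ↦ hJ.indicator_ae_eq_indicator
    (measurableSet_spanningSets μ n) (measure_spanningSets_lt_top μ n).ne ht hμt] with x hx
  have h := hx (spanningSetsIndex μ x)
  rw [indicator_of_mem (mem_spanningSetsIndex μ x)] at h
  exact h

lemma CommutesWithIndicators.norm_multiplier_le (hp : p ≠ ∞)
    {J : Lp 𝕜 p μ →L[𝕜] Lp 𝕜 p μ} (hJ : CommutesWithIndicators J) :
    ∀ᵐ x ∂μ, ‖multiplier J x‖ ≤ ‖J‖ := by
  have hp₀ : p ≠ 0 := (zero_lt_one.trans_le Fact.out).ne'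
  have hq : 0 < p.toReal := ENNReal.toReal_pos hp₀ hp
  have hint : ∀ t, MeasurableSet t → μ t < ∞ →
      ∫⁻ x in t, ‖multiplier J x‖ₑ ^ p.toReal ∂μ ≤ ∫⁻ _ in t, ‖J‖ₑ ^ p.toReal ∂μ := by
    intro t ht hμt
    have h := (J.le_opENorm (indicatorConstLp p ht hμt.ne (1 : 𝕜))).trans
      (mul_le_mul_right enorm_indicatorConstLp_le _)
    rw [Lp.enorm_def, eLpNorm_congr_ae (hJ.apply_indicatorConstLp_ae_eq ht hμt.ne),
      eLpNorm_indicator_eq_eLpNorm_restrict ht, eLpNorm_eq_lintegral_rpow_enorm_toReal hp₀ hp,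
      enorm_one, one_mul, one_div, ENNReal.rpow_inv_le_iff hq,
      ENNReal.mul_rpow_of_nonneg _ _ hq.le, ← ENNReal.rpow_mul, inv_mul_cancel₀ hq.ne',
      ENNReal.rpow_one] at h
    rwa [setLIntegral_const]
  filter_upwards [ae_le_of_forall_setLIntegral_le_of_sigmaFinite
    ((measurable_multiplier J).enorm.pow_const _) hint] with x hx
  exact enorm_le_iff_norm_le.1 ((ENNReal.rpow_le_rpow_iff hq).1 hx)

lemma CommutesWithIndicators.memLp_top_multiplier (hp : p ≠ ∞)
    {J : Lp 𝕜 p μ →L[𝕜] Lp 𝕜 p μ} (hJ : CommutesWithIndicators J) : MemLp (multiplier J) ∞ μ :=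
  memLp_top_of_bound (measurable_multiplier J).aestronglyMeasurable _ (hJ.norm_multiplier_le hp)

lemma CommutesWithIndicators.apply_ae_eq_mul (hp : p ≠ ∞) {J : Lp 𝕜 p μ →L[𝕜] Lp 𝕜 p μ}
    (hJ : CommutesWithIndicators J) (f : Lp 𝕜 p μ) :
    J f =ᵐ[μ] fun x ↦ multiplier J x * f x := by
  have hm := hJ.memLp_top_multiplier hp
  set M := (ContinuousLinearMap.mul 𝕜 𝕜).holderL μ ∞ p p (hm.toLp _)
  have hM : ∀ g, M g =ᵐ[μ] fun x ↦ multiplier J x * g x := fun g ↦ by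
    filter_upwards [(ContinuousLinearMap.mul 𝕜 𝕜).coeFn_holder (r := p) (hm.toLp _) g,
      hm.coeFn_toLp] with x h₁ h₂
    rw [ContinuousLinearMap.holderL_apply_apply, h₁, ContinuousLinearMap.mul_apply', h₂]
  have hJM : ∀ g, J g = M g := by
    intro g
    induction g using Lp.induction hp with
    | @indicatorConst c s hs hμs =>
      rw [Lp.simpleFunc.coe_indicatorConst, indicatorConstLp_eq_smul_one, map_smul, map_smul]
      congr 1
      refine Lp.ext ?_
      filter_upwards [hJ.apply_indicatorConstLp_ae_eq hs hμs.ne,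
        hM (indicatorConstLp p hs hμs.ne 1),
        indicatorConstLp_coeFn (p := p) (hs := hs) (hμs := hμs.ne) (c := (1 : 𝕜))] with x h₁ h₂ h₃
      by_cases hx : x ∈ s <;> simp [h₁, h₂, h₃, hx]
    | add _ _ _ hf hg => rw [map_add, map_add, hf, hg]
    | isClosed => exact isClosed_eq J.continuous M.continuous
  rw [hJM f]
  exact hM f

theorem commutesWithIndicators_iff_exists_memLp_top (hp : p ≠ ∞) (J : Lp 𝕜 p μ →L[𝕜] Lp 𝕜 p μ) :
    CommutesWithIndicators J ↔
      ∃ h : α → 𝕜, MemLp h ∞ μ ∧ ∀ f : Lp 𝕜 p μ, J f =ᵐ[μ] fun x ↦ h x * f x := by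
  refine ⟨fun hJ ↦ ⟨multiplier J, hJ.memLp_top_multiplier hp, hJ.apply_ae_eq_mul hp⟩, ?_⟩
  rintro ⟨h, -, hJ⟩ s hs f
  refine Lp.ext ?_
  filter_upwards [hJ (indicatorLp hs f), coeFn_indicatorLp hs f, coeFn_indicatorLp hs (J f), hJ f]
    with x h₁ h₂ h₃ h₄
  by_cases hx : x ∈ s <;> simp [h₁, h₂, h₃, h₄, hx]

end Multiplier

lemma indMul_eq_indicatorLp {A : Set ℝ} (hA : MeasurableSet A) (f : Lp ℂ 2 (volume : Measure ℝ)) :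
    indMul A f = indicatorLp hA f :=
  dif_pos hA

/-- a bounded operator `J` on `L²(ℝ)` is multiplication by some
`h ∈ L∞(ℝ)` iff `M_{1_A} J M_{1_B} = 0` for all disjoint Borel sets `A, B ⊂ ℝ`. -/
theorem statement10
    (J : (Lp ℂ 2 (volume : Measure ℝ)) →L[ℂ] (Lp ℂ 2 (volume : Measure ℝ))) :
    (∃ h : ℝ → ℂ, MemLp h ⊤ (volume : Measure ℝ) ∧
      ∀ f : Lp ℂ 2 (volume : Measure ℝ),
        (J f : ℝ → ℂ) =ᵐ[volume] fun x : ℝ => h x * (f : ℝ → ℂ) x) ↔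
    (∀ A B : Set ℝ, MeasurableSet A → MeasurableSet B → Disjoint A B →
      ∀ f : Lp ℂ 2 (volume : Measure ℝ), indMul A (J (indMul B f)) = 0) := by
  rw [← commutesWithIndicators_iff_exists_memLp_top (p := 2) ENNReal.ofNat_ne_top,
    commutesWithIndicators_iff]
  simp only [← indMul_eq_indicatorLp]
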